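/- Let d ≥ 1 and β > 0. There is a constant C = C(d,β) > 0 such that for all z ∈ ℝ^d with z ≠ 0, G₂(z) ≤ C / |z|^{d−1}, where G₂(z) = ∫₀¹ (−log √(1−u))^{β/2} e^{−|z|²/(2u)} u^{−d/2} du. -/

import Mathlib

open MeasureTheory Set

/-- The kernel `G₂(z)`. -/
noncomputable def G2 (d : ℕ) (β : ℝ) (z : EuclideanSpace ℝ (Fin d)) : ℝ :=
  ∫ u in Ioo (0:ℝ) 1,
    (-Real.log (Real.sqrt (1 - u))) ^ (β/2) * Real.exp (-‖z‖ ^ 2 / (2 * u)) *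
      u ^ (-(d:ℝ)/2)

/-- Auxiliary dominating function `(1-u)^{-1/4} u^{-1/2}`. -/
noncomputable def psiF (u : ℝ) : ℝ := (1 - u) ^ (-(1:ℝ)/4) * u ^ (-(1:ℝ)/2)

lemma psiF_meas : Measurable psiF :=
  ((measurable_const.sub measurable_id).pow measurable_const).mul
    (measurable_id.pow measurable_const)

lemma psiF_integrable : IntegrableOn psiF (Ioo (0:ℝ) 1) := by
  have hA : IntegrableOn psiF (Ioc (0:ℝ) (1/2)) := by
    rw [integrableOn_Ioc_iff_integrableOn_Ioo]
    have hbase : IntegrableOn (fun u : ℝ => u ^ (-(1:ℝ)/2)) (Ioo (0:ℝ) (1/2)) :=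
      (intervalIntegral.integrableOn_Ioo_rpow_iff (by norm_num)).2 (by norm_num)
    refine Integrable.mono' (hbase.const_mul ((2:ℝ) ^ ((1:ℝ)/4)))
      psiF_meas.aestronglyMeasurable ?_
    rw [ae_restrict_iff' measurableSet_Ioo]
    refine ae_of_all _ fun u hu => ?_
    obtain ⟨hu0, hu1⟩ := hu
    have h1u : (0:ℝ) < 1 - u := by linarith
    have hψ : 0 ≤ psiF u :=
      mul_nonneg (Real.rpow_nonneg h1u.le _) (Real.rpow_nonneg hu0.le _)
    rw [Real.norm_eq_abs, abs_of_nonneg hψ]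
    have hle : (1 - u) ^ (-(1:ℝ)/4) ≤ (2:ℝ) ^ ((1:ℝ)/4) := by
      have := Real.rpow_le_rpow_of_nonpos (by norm_num : (0:ℝ) < 1/2)
        (by linarith : (1/2:ℝ) ≤ 1 - u) (by norm_num : (-(1:ℝ)/4) ≤ 0)
      calc (1 - u) ^ (-(1:ℝ)/4) ≤ ((1:ℝ)/2) ^ (-(1:ℝ)/4) := this
        _ = (2:ℝ) ^ ((1:ℝ)/4) := by
            rw [show (1:ℝ)/2 = 2⁻¹ by norm_num,
              Real.inv_rpow (by norm_num : (0:ℝ) ≤ 2),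
              ← Real.rpow_neg (by norm_num : (0:ℝ) ≤ 2)]
            norm_num
    exact mul_le_mul_of_nonneg_right hle (Real.rpow_nonneg hu0.le _)
  have hB : IntegrableOn psiF (Ioc (1/2:ℝ) 1) := by
    have hbase : IntegrableOn (fun u : ℝ => (1 - u) ^ (-(1:ℝ)/4)) (Ioc (1/2:ℝ) 1) := by
      have h0 : IntervalIntegrable (fun x : ℝ => x ^ (-(1:ℝ)/4)) volume 0 (1/2) :=
        intervalIntegral.intervalIntegrable_rpow' (by norm_num)
      have h1 := (h0.comp_sub_left 1)
      rw [intervalIntegrable_iff] at h1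
      have he : Set.uIoc ((1:ℝ)-0) (1-1/2) = Ioc (1/2:ℝ) 1 := by
        rw [Set.uIoc_comm, Set.uIoc_of_le (by norm_num : (1:ℝ)-1/2 ≤ 1-0)]
        norm_num
      rwa [he] at h1
    refine Integrable.mono' (hbase.const_mul ((2:ℝ) ^ ((1:ℝ)/2)))
      psiF_meas.aestronglyMeasurable ?_
    rw [ae_restrict_iff' measurableSet_Ioc]
    refine ae_of_all _ fun u hu => ?_
    obtain ⟨hu0, hu1⟩ := hu
    have hu0' : (0:ℝ) < u := by linarith
    have h1u : (0:ℝ) ≤ 1 - u := by linarith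
    have hψ : 0 ≤ psiF u :=
      mul_nonneg (Real.rpow_nonneg h1u _) (Real.rpow_nonneg hu0'.le _)
    rw [Real.norm_eq_abs, abs_of_nonneg hψ]
    have hle : u ^ (-(1:ℝ)/2) ≤ (2:ℝ) ^ ((1:ℝ)/2) := by
      have := Real.rpow_le_rpow_of_nonpos (by norm_num : (0:ℝ) < 1/2)
        hu0.le (by norm_num : (-(1:ℝ)/2) ≤ 0)
      calc u ^ (-(1:ℝ)/2) ≤ ((1:ℝ)/2) ^ (-(1:ℝ)/2) := this
        _ = (2:ℝ) ^ ((1:ℝ)/2) := by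
            rw [show (1:ℝ)/2 = 2⁻¹ by norm_num,
              Real.inv_rpow (by norm_num : (0:ℝ) ≤ 2),
              ← Real.rpow_neg (by norm_num : (0:ℝ) ≤ 2)]
            norm_num
    calc psiF u = (1 - u) ^ (-(1:ℝ)/4) * u ^ (-(1:ℝ)/2) := rfl
      _ ≤ (1 - u) ^ (-(1:ℝ)/4) * (2:ℝ) ^ ((1:ℝ)/2) :=
          mul_le_mul_of_nonneg_left hle (Real.rpow_nonneg h1u _)
      _ = (2:ℝ) ^ ((1:ℝ)/2) * (1 - u) ^ (-(1:ℝ)/4) := mul_comm _ _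
  refine (hA.union hB).mono_set fun x hx => ?_
  rcases le_or_gt x (1/2) with h | h
  · exact Or.inl ⟨hx.1, h⟩
  · exact Or.inr ⟨h, hx.2.le⟩

lemma expbound (d : ℕ) (hd : 1 ≤ d) {t : ℝ} (ht : 0 < t) :
    Real.exp (-(t/2)) * t ^ (((d:ℝ)-1)/2) ≤ 1 + 2^d * (Nat.factorial d : ℝ) := by
  have hd1 : (1:ℝ) ≤ (d:ℝ) := by exact_mod_cast hd
  have hfac : (0:ℝ) < (Nat.factorial d : ℝ) := by exact_mod_cast Nat.factorial_pos d
  rcases le_or_gt t 1 with h | h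
  · have h1 : t ^ (((d:ℝ)-1)/2) ≤ 1 := Real.rpow_le_one ht.le h (by linarith)
    have h2 : Real.exp (-(t/2)) ≤ 1 := Real.exp_le_one_iff.2 (by linarith)
    have h3 : 0 ≤ t ^ (((d:ℝ)-1)/2) := Real.rpow_nonneg ht.le _
    have h4 : (0:ℝ) < 2^d := by positivity
    nlinarith [Real.exp_pos (-(t/2))]
  · have h3 : t ^ (((d:ℝ)-1)/2) ≤ t ^ (d:ℝ) :=
      Real.rpow_le_rpow_of_exponent_le h.le (by linarith)
    have h4 : t ^ (d:ℝ) = t ^ d := Real.rpow_natCast t d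
    have h5 : (t/2)^d / (Nat.factorial d : ℝ) ≤ Real.exp (t/2) :=
      Real.pow_div_factorial_le_exp (x := t/2) (by linarith) d
    have h5' : (t/2)^d ≤ (Nat.factorial d : ℝ) * Real.exp (t/2) :=
      ((div_le_iff₀ hfac).1 h5).trans (le_of_eq (mul_comm _ _))
    have h6 : t ^ d ≤ 2^d * (Nat.factorial d : ℝ) * Real.exp (t/2) := by
      have he : t ^ d = (t/2)^d * 2^d := by
        rw [div_pow]
        field_simp
      rw [he]
      calc (t/2)^d * 2^d ≤ ((Nat.factorial d : ℝ) * Real.exp (t/2)) * 2^d :=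
            mul_le_mul_of_nonneg_right h5' (by positivity)
        _ = 2^d * (Nat.factorial d : ℝ) * Real.exp (t/2) := by ring
    calc Real.exp (-(t/2)) * t ^ (((d:ℝ)-1)/2)
        ≤ Real.exp (-(t/2)) * t ^ (d:ℝ) :=
          mul_le_mul_of_nonneg_left h3 (Real.exp_pos _).le
      _ = Real.exp (-(t/2)) * t ^ d := by rw [h4]
      _ ≤ Real.exp (-(t/2)) * (2^d * (Nat.factorial d : ℝ) * Real.exp (t/2)) :=
          mul_le_mul_of_nonneg_left h6 (Real.exp_pos _).le
      _ = 2^d * (Nat.factorial d : ℝ) * (Real.exp (-(t/2)) * Real.exp (t/2)) := by ring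
      _ = 2^d * (Nat.factorial d : ℝ) := by rw [← Real.exp_add]; norm_num
      _ ≤ 1 + 2^d * (Nat.factorial d : ℝ) := by linarith

lemma kernel_le (d : ℕ) (hd : 1 ≤ d) {a u : ℝ} (ha : 0 < a) (hu : 0 < u) :
    Real.exp (-a^2/(2*u)) * u ^ (-(d:ℝ)/2) ≤
      (1 + 2^d * (Nat.factorial d : ℝ)) * (a ^ (-((d:ℝ)-1)) * u ^ (-(1:ℝ)/2)) := by
  set t := a^2/u with hta
  have ht : 0 < t := div_pos (by positivity) hu
  have key : ∀ c : ℝ, t ^ c = a ^ (2*c) * u ^ (-c) := by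
    intro c
    rw [hta, Real.div_rpow (by positivity) hu.le, Real.rpow_neg hu.le,
      ← Real.rpow_natCast a 2, ← Real.rpow_mul ha.le, div_eq_mul_inv]
    norm_num
  have harg : -a^2/(2*u) = -(t/2) := by rw [hta]; ring
  have ha2 : a ^ (2*(((d:ℝ)-1)/2)) * a ^ (-((d:ℝ)-1)) = 1 := by
    rw [← Real.rpow_add ha, show 2*(((d:ℝ)-1)/2) + -((d:ℝ)-1) = 0 by ring, Real.rpow_zero]
  have hu2 : u ^ (-(((d:ℝ)-1)/2)) * u ^ (-(1:ℝ)/2) = u ^ (-(d:ℝ)/2) := by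
    rw [← Real.rpow_add hu]; congr 1; ring
  have e1 : Real.exp (-(t/2)) * t ^ (((d:ℝ)-1)/2) * (a ^ (-((d:ℝ)-1)) * u ^ (-(1:ℝ)/2))
      = Real.exp (-a^2/(2*u)) * u ^ (-(d:ℝ)/2) := by
    rw [harg, key (((d:ℝ)-1)/2)]
    calc Real.exp (-(t/2)) * (a ^ (2*(((d:ℝ)-1)/2)) * u ^ (-(((d:ℝ)-1)/2))) *
          (a ^ (-((d:ℝ)-1)) * u ^ (-(1:ℝ)/2))
        = Real.exp (-(t/2)) * ((a ^ (2*(((d:ℝ)-1)/2)) * a ^ (-((d:ℝ)-1))) *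
            (u ^ (-(((d:ℝ)-1)/2)) * u ^ (-(1:ℝ)/2))) := by ring
      _ = Real.exp (-(t/2)) * u ^ (-(d:ℝ)/2) := by rw [ha2, hu2, one_mul]
  rw [← e1]
  exact mul_le_mul_of_nonneg_right (expbound d hd ht)
    (mul_nonneg (Real.rpow_nonneg ha.le _) (Real.rpow_nonneg hu.le _))

lemma log_bound {β u : ℝ} (hβ : 0 < β) (hu : 0 < u) (hu1 : u < 1) :
    (-Real.log (Real.sqrt (1-u))) ^ (β/2) ≤ β ^ (β/2) * (1-u) ^ (-(1:ℝ)/4) := by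
  have h1u : (0:ℝ) < 1 - u := by linarith
  set x := Real.sqrt (1-u) with hxd
  have hx : 0 < x := Real.sqrt_pos.2 h1u
  have hx1 : x ≤ 1 := Real.sqrt_le_one.2 (by linarith)
  have hlog : 0 ≤ -Real.log x := by
    have := Real.log_nonpos hx.le hx1; linarith
  have hstep : -Real.log x ≤ β * x ^ (-(1:ℝ)/β) := by
    have h2 : Real.log (x ^ (-(1:ℝ)/β)) ≤ x ^ (-(1:ℝ)/β) - 1 :=
      Real.log_le_sub_one_of_pos (Real.rpow_pos_of_pos hx _)
    rw [Real.log_rpow hx] at h2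
    have h4 := mul_le_mul_of_nonneg_left
      (h2.trans (by linarith : x ^ (-(1:ℝ)/β) - 1 ≤ x ^ (-(1:ℝ)/β))) hβ.le
    calc -Real.log x = β * (-(1:ℝ)/β * Real.log x) := by field_simp
      _ ≤ β * x ^ (-(1:ℝ)/β) := h4
  calc (-Real.log x) ^ (β/2) ≤ (β * x ^ (-(1:ℝ)/β)) ^ (β/2) :=
        Real.rpow_le_rpow hlog hstep (by positivity)
    _ = β ^ (β/2) * (x ^ (-(1:ℝ)/β)) ^ (β/2) :=
        Real.mul_rpow hβ.le (Real.rpow_nonneg hx.le _)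
    _ = β ^ (β/2) * x ^ (-(1:ℝ)/2) := by
        rw [← Real.rpow_mul hx.le]
        congr 2
        field_simp
    _ = β ^ (β/2) * (1-u) ^ (-(1:ℝ)/4) := by
        rw [hxd, Real.sqrt_eq_rpow, ← Real.rpow_mul h1u.le]
        norm_num

/-- For `z ≠ 0`, `G₂(z) ≤ C/|z|^{d−1}`. -/
theorem G2_le (d : ℕ) (hd : 1 ≤ d) (β : ℝ) (hβ : 0 < β) :
    ∃ C : ℝ, 0 < C ∧ ∀ z : EuclideanSpace ℝ (Fin d), z ≠ 0 →
      G2 d β z ≤ C / ‖z‖ ^ (d - 1) := by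
  set K : ℝ := 1 + 2^d * (Nat.factorial d : ℝ) with hKd
  have hfac : (0:ℝ) < (Nat.factorial d : ℝ) := by exact_mod_cast Nat.factorial_pos d
  have hK : 0 < K := by positivity
  set J : ℝ := ∫ u in Ioo (0:ℝ) 1, psiF u with hJd
  have hJ0 : 0 ≤ J := by
    rw [hJd]
    apply setIntegral_nonneg measurableSet_Ioo
    intro u hu
    exact mul_nonneg (Real.rpow_nonneg (by linarith [hu.2]) _) (Real.rpow_nonneg hu.1.le _)
  have hβp : 0 < β ^ (β/2) := Real.rpow_pos_of_pos hβ _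
  refine ⟨β ^ (β/2) * K * (J + 1), by positivity, fun z hz => ?_⟩
  have ha : (0:ℝ) < ‖z‖ := norm_pos_iff.2 hz
  have hstep : G2 d β z ≤ (β ^ (β/2) * K * ‖z‖ ^ (-((d:ℝ)-1))) * J := by
    have hle : G2 d β z ≤ ∫ u in Ioo (0:ℝ) 1,
        (β ^ (β/2) * K * ‖z‖ ^ (-((d:ℝ)-1))) * psiF u := by
      unfold G2
      apply integral_mono_of_nonneg
      · filter_upwards [self_mem_ae_restrict measurableSet_Ioo] with u hu
        obtain ⟨hu0, hu1⟩ := hu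
        have hL : 0 ≤ (-Real.log (Real.sqrt (1-u))) ^ (β/2) := by
          apply Real.rpow_nonneg
          have := Real.log_nonpos (Real.sqrt_nonneg (1-u))
            (Real.sqrt_le_one.2 (by linarith : (1:ℝ) - u ≤ 1))
          linarith
        exact mul_nonneg (mul_nonneg hL (Real.exp_pos _).le) (Real.rpow_nonneg hu0.le _)
      · exact (psiF_integrable.const_mul _)
      · filter_upwards [self_mem_ae_restrict measurableSet_Ioo] with u hu
        obtain ⟨hu0, hu1⟩ := hu
        have h1 := log_bound hβ hu0 hu1
        have h2 := kernel_le d hd ha hu0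
        have hL : 0 ≤ (-Real.log (Real.sqrt (1-u))) ^ (β/2) := by
          apply Real.rpow_nonneg
          have := Real.log_nonpos (Real.sqrt_nonneg (1-u))
            (Real.sqrt_le_one.2 (by linarith : (1:ℝ) - u ≤ 1))
          linarith
        have hEU : 0 ≤ Real.exp (-‖z‖^2/(2*u)) * u ^ (-(d:ℝ)/2) :=
          mul_nonneg (Real.exp_pos _).le (Real.rpow_nonneg hu0.le _)
        have hR : 0 ≤ β ^ (β/2) * (1-u) ^ (-(1:ℝ)/4) :=
          mul_nonneg hβp.le (Real.rpow_nonneg (by linarith) _)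
        calc (-Real.log (Real.sqrt (1-u))) ^ (β/2) * Real.exp (-‖z‖^2/(2*u)) *
              u ^ (-(d:ℝ)/2)
            = (-Real.log (Real.sqrt (1-u))) ^ (β/2) *
                (Real.exp (-‖z‖^2/(2*u)) * u ^ (-(d:ℝ)/2)) := mul_assoc _ _ _
          _ ≤ (β ^ (β/2) * (1-u) ^ (-(1:ℝ)/4)) *
                (K * (‖z‖ ^ (-((d:ℝ)-1)) * u ^ (-(1:ℝ)/2))) :=
              mul_le_mul h1 h2 hEU hR
          _ = (β ^ (β/2) * K * ‖z‖ ^ (-((d:ℝ)-1))) * psiF u := by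
              unfold psiF; ring
    calc G2 d β z ≤ ∫ u in Ioo (0:ℝ) 1,
          (β ^ (β/2) * K * ‖z‖ ^ (-((d:ℝ)-1))) * psiF u := hle
      _ = (β ^ (β/2) * K * ‖z‖ ^ (-((d:ℝ)-1))) * J := by
          rw [hJd, ← integral_const_mul]
  have hrw : ‖z‖ ^ (-((d:ℝ)-1)) = (‖z‖ ^ (d-1))⁻¹ := by
    rw [show ((d:ℝ)-1) = ((d-1 : ℕ) : ℝ) by push_cast [Nat.cast_sub hd]; ring,
      Real.rpow_neg ha.le, Real.rpow_natCast]
  have hinv : (0:ℝ) ≤ (‖z‖ ^ (d-1))⁻¹ := inv_nonneg.2 (pow_nonneg ha.le _)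
  calc G2 d β z ≤ (β ^ (β/2) * K * ‖z‖ ^ (-((d:ℝ)-1))) * J := hstep
    _ = β ^ (β/2) * K * J * (‖z‖ ^ (d-1))⁻¹ := by rw [hrw]; ring
    _ ≤ β ^ (β/2) * K * (J+1) * (‖z‖ ^ (d-1))⁻¹ := by
        apply mul_le_mul_of_nonneg_right _ hinv
        have : β ^ (β/2) * K > 0 := by positivity
        nlinarith
    _ = β ^ (β/2) * K * (J + 1) / ‖z‖ ^ (d-1) := (div_eq_mul_inv _ _).symm
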